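/- arXiv:2411.14057 — 9 statements merged into one kernel-verified Lean document; each statement's English description precedes it below -/
import Mathlib

section
/- Let G be a DAG on leaf set X, let A be a nonempty subset of X, and suppose lca_G(A) is well-defined. Then C_G(lca_G(A)) is the unique inclusion-minimal cluster in C_G := {C_G(v) : v ∈ V(G)} that contains A. -/
open Relation

variable {V : Type*}

/-- A directed graph given by an edge relation `E` is acyclic if it has no directed cycle. -/
def DagAcyclic (E : V → V → Prop) : Prop := ∀ v, ¬ Relation.TransGen E v v

/-- A leaf is a vertex with no out-neighbours (no children). -/
def DagLeaf (E : V → V → Prop) (v : V) : Prop := ∀ u, ¬ E v u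

/-- A root is a vertex with no in-neighbours (no parents). -/
def DagRoot (E : V → V → Prop) (v : V) : Prop := ∀ u, ¬ E u v

/-- `Descends E u v` means `u ≤_G v`: there is a directed path from `v` down to `u`. -/
def Descends (E : V → V → Prop) (u v : V) : Prop := Relation.ReflTransGen E v u

/-- `StrictDescends E u v` means `u <_G v` (a nonempty directed path from `v` down to `u`;
in an acyclic digraph this is exactly `u ≤_G v ∧ u ≠ v`). -/
def StrictDescends (E : V → V → Prop) (u v : V) : Prop := Relation.TransGen E v u

/-- The cluster `C_G(v)`: the set of leaves that are descendants of `v`. -/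
def dagCluster (E : V → V → Prop) (v : V) : Set V := {x | DagLeaf E x ∧ Descends E x v}

/-- The cluster system `𝔠_G = {C_G(v) : v ∈ V(G)}`. -/
def dagClusters (E : V → V → Prop) : Set (Set V) := Set.range (dagCluster E)

/-- `v` is a common ancestor of `A`. -/
def IsCA (E : V → V → Prop) (A : Set V) (v : V) : Prop := ∀ a ∈ A, Descends E a v

/-- `v` is a least common ancestor of `A`: a `≤_G`-minimal common ancestor of `A`. -/
def IsLCA (E : V → V → Prop) (A : Set V) (v : V) : Prop :=
  IsCA E A v ∧ ∀ u, IsCA E A u → ¬ StrictDescends E u v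

/-- `lca_G(A)` is well-defined and equal to `v`: `v` is the unique LCA of `A`. -/
def IsUniqueLCA (E : V → V → Prop) (A : Set V) (v : V) : Prop :=
  IsLCA E A v ∧ ∀ w, IsLCA E A w → w = v

/-- `C` is an inclusion-minimal member of `𝔠` containing `A`. -/
def IsMinContaining (𝔠 : Set (Set V)) (A C : Set V) : Prop :=
  C ∈ 𝔠 ∧ A ⊆ C ∧ ∀ D ∈ 𝔠, A ⊆ D → D ⊆ C → D = C

/-- `C` is the unique inclusion-minimal member of `𝔠` containing `A`. -/
def IsUniqueMin (𝔠 : Set (Set V)) (A C : Set V) : Prop :=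
  IsMinContaining 𝔠 A C ∧ ∀ D, IsMinContaining 𝔠 A D → D = C

/-- Two sets overlap: their intersection is nonempty and neither contains the other. -/
def SetsOverlap (M M' : Set V) : Prop := (M ∩ M').Nonempty ∧ ¬ M ⊆ M' ∧ ¬ M' ⊆ M

/-- The edge relation of the Hasse diagram of a set system `𝔠`: an edge from `A` to `B`
iff `B ⊊ A` and no `C ∈ 𝔠` lies strictly in between. -/
def HasseE {X : Type*} (𝔠 : Set (Set X)) (A B : ↥𝔠) : Prop :=
  B.1 ⊂ A.1 ∧ ∀ C ∈ 𝔠, ¬ (B.1 ⊂ C ∧ C ⊂ A.1)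

/-- The edge relation of `G ⊖ v`: on vertices distinct from `v`, keep the old edges and
add an edge from each parent of `v` to each child of `v`. -/
def ominus (E : V → V → Prop) (v : V) (p q : V) : Prop :=
  p ≠ v ∧ q ≠ v ∧ (E p q ∨ (E p v ∧ E v q))


lemma exists_lca_below [Fintype V] (E : V → V → Prop) (hE : DagAcyclic E)
    (A : Set V) (v : V) (hv : IsCA E A v) :
    ∃ w, IsLCA E A w ∧ Descends E w v := by
  haveI : IsTrans V (StrictDescends E) := ⟨fun a b c hab hbc => hbc.trans hab⟩
  haveI : IsIrrefl V (StrictDescends E) := ⟨fun a ha => hE a ha⟩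
  have hwf : WellFounded (StrictDescends E) :=
    Finite.wellFounded_of_trans_of_irrefl _
  obtain ⟨w, ⟨hwCA, hwv⟩, hmin⟩ :=
    hwf.has_min {u | IsCA E A u ∧ Descends E u v} ⟨v, hv, Relation.ReflTransGen.refl⟩
  refine ⟨w, ⟨hwCA, fun u hu hlt => ?_⟩, hwv⟩
  exact hmin u ⟨hu, hwv.trans hlt.to_reflTransGen⟩ hlt

lemma cluster_le_of_ca [Fintype V] (E : V → V → Prop) (hE : DagAcyclic E)
    (A : Set V) (ℓ : V) (h : IsUniqueLCA E A ℓ)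
    (v : V) (hv : IsCA E A v) : dagCluster E ℓ ⊆ dagCluster E v := by
  obtain ⟨w, hw, hwv⟩ := exists_lca_below E hE A v hv
  have : w = ℓ := h.2 w hw
  subst this
  rintro x ⟨hx, hxw⟩
  exact ⟨hx, hwv.trans hxw⟩

/-- if `lca_G(A)` is well-defined, then `C_G(lca_G(A))` is the unique
inclusion-minimal cluster of `G` containing `A`. -/
theorem stmt3 [Fintype V] (E : V → V → Prop) (hE : DagAcyclic E)
    (A : Set V) (hne : A.Nonempty) (hleaf : ∀ a ∈ A, DagLeaf E a)
    (ℓ : V) (h : IsUniqueLCA E A ℓ) :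
    IsUniqueMin (dagClusters E) A (dagCluster E ℓ) := by
  have hAsub : A ⊆ dagCluster E ℓ := fun a ha => ⟨hleaf a ha, h.1.1 a ha⟩
  have key : ∀ D ∈ dagClusters E, A ⊆ D → dagCluster E ℓ ⊆ D := by
    rintro D ⟨v, rfl⟩ hAD
    exact cluster_le_of_ca E hE A ℓ h v (fun a ha => (hAD ha).2)
  constructor
  · exact ⟨⟨ℓ, rfl⟩, hAsub, fun D hD hAD hDsub =>
      Set.Subset.antisymm hDsub (key D hD hAD)⟩
  · rintro D ⟨hD, hAD, hDmin⟩
    exact (hDmin _ ⟨ℓ, rfl⟩ hAsub (key D hD hAD)).symm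
end

section
/- Let G be a DAG on X and let I be a set of integers containing 1, with I ⊆ {1,...,|X|}. If |I| > 1 and G has the I-lca-property (lca_G(A) is well-defined for all A ⊆ X with |A| ∈ I), then the underlying undirected graph of G is connected. -/
open Relation

variable {V : Type*}

lemma exists_leaf_desc [Fintype V] (E : V → V → Prop) (hE : DagAcyclic E) :
    ∀ v : V, ∃ x, DagLeaf E x ∧ Descends E x v := by
  have hwf : WellFounded (fun a b : V => E b a) := by
    have hirr : IsIrrefl V (Relation.TransGen (fun a b : V => E b a)) :=
      ⟨fun v h => hE v (by simpa [Relation.transGen_swap] using h)⟩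
    have htr : IsTrans V (Relation.TransGen (fun a b : V => E b a)) := inferInstance
    have hwf2 : WellFounded (Relation.TransGen (fun a b : V => E b a)) :=
      Finite.wellFounded_of_trans_of_irrefl _
    exact Subrelation.wf (q := fun a b : V => E b a) (r := Relation.TransGen (fun a b : V => E b a)) (fun h => Relation.TransGen.single h) hwf2
  intro v
  induction v using hwf.induction with
  | _ v ih =>
    by_cases h : DagLeaf E v
    · exact ⟨v, h, Relation.ReflTransGen.refl⟩
    · simp only [DagLeaf, not_forall, not_not] at h
      obtain ⟨u, hu⟩ := h
      obtain ⟨x, hx, hd⟩ := ih u hu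
      exact ⟨x, hx, Relation.ReflTransGen.head hu hd⟩

/-- a DAG with the `I`-lca-property for `|I| > 1` is connected. -/
theorem stmt9 [Fintype V] (E : V → V → Prop) (hE : DagAcyclic E)
    (I : Set ℕ) (h1 : 1 ∈ I) (hI : I ⊆ Set.Icc 1 (Set.ncard {v | DagLeaf E v}))
    (hcard : 1 < I.ncard)
    (hlca : ∀ A : Set V, (∀ a ∈ A, DagLeaf E a) → A.ncard ∈ I → ∃ v, IsUniqueLCA E A v) :
    ∀ u v : V, Relation.ReflTransGen (fun a b => E a b ∨ E b a) u v := by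
  obtain ⟨k, hkI, hk1⟩ := Set.exists_ne_of_one_lt_ncard hcard 1
  have hk2 : 2 ≤ k := by have := (hI hkI).1; omega
  have hsym : Symmetric (fun a b : V => E a b ∨ E b a) := fun a b h => h.symm
  have hmono : ∀ {a b : V}, Descends E a b →
      Relation.ReflTransGen (fun a b : V => E a b ∨ E b a) b a :=
    fun h => Relation.ReflTransGen.mono (fun _ _ he => Or.inl he) _ _ h
  have key : ∀ x y : V, DagLeaf E x → DagLeaf E y →
      Relation.ReflTransGen (fun a b => E a b ∨ E b a) x y := by
    intro x y hx hy
    have hsub : {x, y} ⊆ {v : V | DagLeaf E v} := by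
      intro a ha; rcases ha with rfl | rfl <;> assumption
    have hn : ({x, y} : Set V).ncard ≤ k :=
      le_trans (le_trans (Set.ncard_insert_le _ _) (by simp)) hk2
    obtain ⟨A, hA1, hA2, hA3⟩ :=
      Set.exists_subsuperset_card_eq hsub hn (hI hkI).2
    obtain ⟨w, hw⟩ := hlca A (fun a ha => hA2 ha) (hA3 ▸ hkI)
    have hca := hw.1.1
    have hxw : Descends E x w := hca x (hA1 (by simp))
    have hyw : Descends E y w := hca y (hA1 (by simp))
    exact (((@Relation.ReflTransGen.stdSymm _ _ ⟨fun _ _ h => hsym h⟩).symm _ _) (hmono hxw)).trans (hmono hyw)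
  intro u v
  obtain ⟨x, hx, hxu⟩ := exists_leaf_desc E hE u
  obtain ⟨y, hy, hyv⟩ := exists_leaf_desc E hE v
  exact ((hmono hxu).trans (key x y hx hy)).trans
    (((@Relation.ReflTransGen.stdSymm _ _ ⟨fun _ _ h => hsym h⟩).symm _ _) (hmono hyv))
end

section
/- Let G be a DAG on X with the I-lca-property, where I is a set of integers containing 1. Then the cluster system 𝔠_G is pre-I-ary: for every A ⊆ X with |A| ∈ I, there is a unique inclusion-minimal cluster C ∈ 𝔠_G with A ⊆ C. -/
open Relation

variable {V : Type*}

/-- the cluster system of a DAG with the `I`-lca-property is pre-`I`-ary. -/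
theorem stmt10 [Fintype V] (E : V → V → Prop) (hE : DagAcyclic E)
    (I : Set ℕ) (h1 : 1 ∈ I) (hI : I ⊆ Set.Icc 1 (Set.ncard {v | DagLeaf E v}))
    (hlca : ∀ A : Set V, (∀ a ∈ A, DagLeaf E a) → A.ncard ∈ I → ∃ v, IsUniqueLCA E A v) :
    ∀ A : Set V, (∀ a ∈ A, DagLeaf E a) → A.ncard ∈ I →
      ∃ C, IsUniqueMin (dagClusters E) A C := by
  intro A hA hcard
  obtain ⟨v, hv, hvuniq⟩ := hlca A hA hcard
  have hwf : WellFounded (fun a b : V => StrictDescends E a b) := by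
    have h1 : IsIrrefl V (fun a b : V => StrictDescends E a b) := ⟨fun a => hE a⟩
    have h2 : IsTrans V (fun a b : V => StrictDescends E a b) :=
      ⟨fun a b c hab hbc => hbc.trans hab⟩
    exact Finite.wellFounded_of_trans_of_irrefl _
  -- any common ancestor of A is above v
  have key : ∀ u, IsCA E A u → Descends E v u := by
    intro u hu
    obtain ⟨w, ⟨hwca, hwu⟩, hwmin⟩ :=
      hwf.has_min {w | IsCA E A w ∧ Descends E w u} ⟨u, hu, Relation.ReflTransGen.refl⟩
    have hwlca : IsLCA E A w := by
      refine ⟨hwca, fun u' hu' hlt => ?_⟩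
      exact hwmin u' ⟨hu', Relation.ReflTransGen.trans hwu hlt.to_reflTransGen⟩ hlt
    have := hvuniq w hwlca
    subst this
    exact hwu
  have hmono : ∀ u, Descends E v u → dagCluster E v ⊆ dagCluster E u := by
    intro u huv x ⟨hx1, hx2⟩
    exact ⟨hx1, Relation.ReflTransGen.trans huv hx2⟩
  have hAC : A ⊆ dagCluster E v := fun a ha => ⟨hA a ha, hv.1 a ha⟩
  have hsub : ∀ D ∈ dagClusters E, A ⊆ D → dagCluster E v ⊆ D := by
    rintro D ⟨u, rfl⟩ hAD
    exact hmono u (key u (fun a ha => (hAD ha).2))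
  refine ⟨dagCluster E v, ⟨⟨v, rfl⟩, hAC, fun D hD hAD hDC =>
    Set.Subset.antisymm hDC (hsub D hD hAD)⟩, ?_⟩
  intro D ⟨hD, hAD, hDmin⟩
  exact (hDmin (dagCluster E v) ⟨v, rfl⟩ hAC (hsub D hD hAD)).symm
end

section
/- Let G be a DAG on X with the I-lca-property (1 ∈ I) that is additionally I-lca-relevant: every vertex v of G equals lca_G(A) for some A ⊆ X with |A| ∈ I. Then the cluster system 𝔠_G is I-ary: it is pre-I-ary, and for every cluster C ∈ 𝔠_G there exists A ⊆ X with |A| ∈ I such that C is the unique inclusion-minimal element of 𝔠_G containing A. -/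
open Relation

variable {V : Type*}

lemma uniqueLCA_uniqueMin [Fintype V] (E : V → V → Prop) (hE : DagAcyclic E)
    {A : Set V} {v : V} (hA : ∀ a ∈ A, DagLeaf E a) (hv : IsUniqueLCA E A v) :
    IsUniqueMin (dagClusters E) A (dagCluster E v) := by
  have hleast : ∀ u : V, A ⊆ dagCluster E u → dagCluster E v ⊆ dagCluster E u := by
    intro u hAu
    have hCAu : IsCA E A u := fun a ha => (hAu ha).2
    let r : V → V → Prop := fun a b => Relation.TransGen E b a
    haveI : IsTrans V r := ⟨fun a b c h1 h2 => h2.trans h1⟩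
    haveI : IsIrrefl V r := ⟨fun a h => hE a h⟩
    have hwf := Finite.wellFounded_of_trans_of_irrefl r
    obtain ⟨w, ⟨hwCA, hwu⟩, hmin⟩ :=
      hwf.has_min {w | IsCA E A w ∧ Descends E w u} ⟨u, hCAu, Relation.ReflTransGen.refl⟩
    have hwlca : IsLCA E A w := by
      refine ⟨hwCA, fun z hz hzw => ?_⟩
      exact hmin z ⟨hz, hwu.trans hzw.to_reflTransGen⟩ hzw
    have hwv : w = v := hv.2 w hwlca
    subst hwv
    intro x hx
    exact ⟨hx.1, hwu.trans hx.2⟩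
  have hsub : A ⊆ dagCluster E v := fun a ha => ⟨hA a ha, hv.1.1 a ha⟩
  constructor
  · refine ⟨⟨v, rfl⟩, hsub, fun D hD hAD hDC => ?_⟩
    obtain ⟨u, rfl⟩ := hD
    exact Set.Subset.antisymm hDC (hleast u hAD)
  · rintro D ⟨⟨u, rfl⟩, hAD, hminD⟩
    exact (hminD (dagCluster E v) ⟨v, rfl⟩ hsub (hleast u hAD)).symm

/-- the cluster system of an `I`-lca-relevant DAG with the
`I`-lca-property is `I`-ary. -/
theorem stmt12 [Fintype V] (E : V → V → Prop) (hE : DagAcyclic E)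
    (I : Set ℕ) (h1 : 1 ∈ I) (hI : I ⊆ Set.Icc 1 (Set.ncard {v | DagLeaf E v}))
    (hlca : ∀ A : Set V, (∀ a ∈ A, DagLeaf E a) → A.ncard ∈ I → ∃ v, IsUniqueLCA E A v)
    (hrel : ∀ v : V, ∃ A : Set V, (∀ a ∈ A, DagLeaf E a) ∧ A.ncard ∈ I ∧ IsUniqueLCA E A v) :
    (∀ A : Set V, (∀ a ∈ A, DagLeaf E a) → A.ncard ∈ I →
      ∃ C, IsUniqueMin (dagClusters E) A C) ∧
    (∀ C ∈ dagClusters E, ∃ A : Set V, (∀ a ∈ A, DagLeaf E a) ∧ A.ncard ∈ I ∧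
      IsUniqueMin (dagClusters E) A C) := by
  constructor
  · intro A hA hAI
    obtain ⟨v, hv⟩ := hlca A hA hAI
    exact ⟨_, uniqueLCA_uniqueMin E hE hA hv⟩
  · rintro C ⟨v, rfl⟩
    obtain ⟨A, hA, hAI, hv⟩ := hrel v
    exact ⟨A, hA, hAI, uniqueLCA_uniqueMin E hE hA hv⟩
end

section
/- Let 𝔔 be a set system on X and I a set of integers with 1 ∈ I. Then 𝔔 is pre-I-ary and grounded if and only if there exists a DAG G on X with the I-lca-property such that 𝔠_G = 𝔔. -/
open Relation

variable {V : Type*}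

section Helpers

variable {W : Type*} {E : W → W → Prop}

theorem my_exists_lca_le [Finite W] (hac : DagAcyclic E) (A : Set W) (u : W)
    (hu : IsCA E A u) : ∃ m, IsLCA E A m ∧ Descends E m u := by
  have hwf : WellFounded (fun a b : W => StrictDescends E a b) := by
    have h1 : IsTrans W (fun a b : W => StrictDescends E a b) :=
      ⟨fun a b c h1 h2 => h2.trans h1⟩
    have h2 : IsIrrefl W (fun a b : W => StrictDescends E a b) := ⟨hac⟩
    exact Finite.wellFounded_of_trans_of_irrefl _
  obtain ⟨m, ⟨hmu, hmca⟩, hmin⟩ := hwf.has_min {w | Descends E w u ∧ IsCA E A w}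
    ⟨u, Relation.ReflTransGen.refl, hu⟩
  refine ⟨m, ⟨hmca, fun w hw hsw => ?_⟩, hmu⟩
  exact hmin w ⟨hmu.trans hsw.to_reflTransGen, hw⟩ hsw

theorem my_exists_leaf [Finite W] (hac : DagAcyclic E) (v : W) :
    ∃ m, DagLeaf E m ∧ Descends E m v := by
  obtain ⟨m, ⟨_, hmin⟩, hmv⟩ := my_exists_lca_le hac ∅ v
    (fun a ha => absurd ha (Set.notMem_empty a))
  exact ⟨m, fun c hc => hmin c (fun a ha => absurd ha (Set.notMem_empty a))
    (Relation.TransGen.single hc), hmv⟩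

end Helpers

section HasseHelpers

variable {X : Type} [Fintype X] {𝔔 : Set (Set X)}

theorem hasse_subset {A B : ↥𝔔} (h : Relation.ReflTransGen (HasseE 𝔔) A B) :
    B.1 ⊆ A.1 := by
  induction h with
  | refl => exact subset_rfl
  | tail _ e ih => exact e.1.subset.trans ih

theorem hasse_ssubset {A B : ↥𝔔} (h : Relation.TransGen (HasseE 𝔔) A B) :
    B.1 ⊂ A.1 := by
  induction h with
  | single e => exact e.1
  | tail _ e ih => exact e.1.trans ih

theorem hasse_reach (n : ℕ) : ∀ (A B : ↥𝔔), A.1.ncard ≤ n → B.1 ⊆ A.1 →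
    Relation.ReflTransGen (HasseE 𝔔) A B := by
  induction n with
  | zero =>
    intro A B hc hsub
    have hA : A.1 = ∅ := (Set.ncard_eq_zero (Set.toFinite A.1)).mp
      (le_antisymm hc (Nat.zero_le _))
    have hB : B = A := Subtype.ext (by
      rw [hA] at hsub; rw [hA]; exact Set.subset_empty_iff.mp hsub)
    rw [hB]
  | succ n ih =>
    intro A B hc hsub
    rcases eq_or_ne B A with rfl | hne
    · exact Relation.ReflTransGen.refl
    · have hss : B.1 ⊂ A.1 := hsub.ssubset_of_ne (fun h => hne (Subtype.ext h))
      have hTne : B.1 ∈ {C | C ∈ 𝔔 ∧ B.1 ⊆ C ∧ C ⊂ A.1} := ⟨B.2, subset_rfl, hss⟩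
      obtain ⟨C, hCT, hmax⟩ := Set.Finite.exists_maximalFor id
        {C | C ∈ 𝔔 ∧ B.1 ⊆ C ∧ C ⊂ A.1} (Set.toFinite _) ⟨B.1, hTne⟩
      have hedge : HasseE 𝔔 A ⟨C, hCT.1⟩ := by
        refine ⟨hCT.2.2, fun D hD hbet => ?_⟩
        exact hbet.1.not_subset (hmax ⟨hD, hCT.2.1.trans hbet.1.subset, hbet.2⟩ hbet.1.subset)
      have hcard : C.ncard ≤ n := by
        have h1 : C.ncard < A.1.ncard := Set.ncard_lt_ncard hCT.2.2 (Set.toFinite _)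
        omega
      exact Relation.ReflTransGen.head hedge (ih ⟨C, hCT.1⟩ B hcard hCT.2.1)

theorem hasse_descends_iff {A B : ↥𝔔} : Descends (HasseE 𝔔) B A ↔ B.1 ⊆ A.1 :=
  ⟨hasse_subset, fun h => hasse_reach A.1.ncard A B le_rfl h⟩

theorem hasse_strict_iff {A B : ↥𝔔} : StrictDescends (HasseE 𝔔) B A ↔ B.1 ⊂ A.1 := by
  constructor
  · exact hasse_ssubset
  · intro h
    rcases Relation.reflTransGen_iff_eq_or_transGen.mp (hasse_descends_iff.mpr h.subset) with
      heq | ht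
    · exact absurd (congrArg Subtype.val heq) h.ne
    · exact ht

end HasseHelpers

/-- a set system `𝔔` on `X` is pre-`I`-ary and grounded iff there is a DAG
on leaf set `X` with the `I`-lca-property whose cluster system is `𝔔`. -/
theorem stmt13 {X : Type} [Fintype X] (𝔔 : Set (Set X)) (I : Set ℕ) (h1 : 1 ∈ I)
    (hI : I ⊆ Set.Icc 1 (Fintype.card X)) :
    (((∀ x : X, ({x} : Set X) ∈ 𝔔) ∧ ∅ ∉ 𝔔) ∧
      (∀ A : Set X, A.ncard ∈ I → ∃ C, IsUniqueMin 𝔔 A C)) ↔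
    (∃ (W : Type) (_ : Fintype W) (E : W → W → Prop) (ι : X ↪ W),
      DagAcyclic E ∧ (∀ w, DagLeaf E w ↔ w ∈ Set.range ι) ∧
      (∀ A : Set W, (∀ a ∈ A, DagLeaf E a) → A.ncard ∈ I → ∃ v, IsUniqueLCA E A v) ∧
      (fun C : Set W => (⇑ι) ⁻¹' C) '' dagClusters E = 𝔔) := by
  constructor
  · rintro ⟨⟨hsing, hemp⟩, hpre⟩
    classical
    set ι : X ↪ ↥𝔔 := ⟨fun x => ⟨{x}, hsing x⟩, fun a b h => by
      simpa using congrArg Subtype.val h⟩ with hι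
    have hleafiff : ∀ w : ↥𝔔, DagLeaf (HasseE 𝔔) w ↔ w ∈ Set.range ι := by
      intro w
      constructor
      · intro hw
        obtain ⟨x, hx⟩ : w.1.Nonempty := by
          rcases Set.eq_empty_or_nonempty w.1 with h | h
          · exact absurd (h ▸ w.2) hemp
          · exact h
        rcases eq_or_ne w.1 {x} with heq | hne
        · exact ⟨x, Subtype.ext heq.symm⟩
        · exfalso
          have hxs : ({x} : Set X) ⊂ w.1 :=
            (Set.singleton_subset_iff.mpr hx).ssubset_of_ne (Ne.symm hne)
          obtain ⟨C, hCT, hmax⟩ := Set.Finite.exists_maximalFor id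
            {C | C ∈ 𝔔 ∧ C ⊂ w.1} (Set.toFinite _) ⟨{x}, hsing x, hxs⟩
          refine hw ⟨C, hCT.1⟩ ⟨hCT.2, fun D hD hbet => ?_⟩
          exact hbet.1.not_subset (hmax ⟨hD, hbet.2⟩ hbet.1.subset)
      · rintro ⟨x, rfl⟩ u hu
        have h0 : u.1 = ∅ := Set.ssubset_singleton_iff.mp hu.1
        exact hemp (h0 ▸ u.2)
    refine ⟨↥𝔔, Fintype.ofFinite _, HasseE 𝔔, ι, ?_, hleafiff, ?_, ?_⟩
    · exact fun v hv => (hasse_ssubset hv).ne rfl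
    · -- lca property
      intro A hAleaf hAcard
      have hAsub : A ⊆ Set.range ι := fun a ha => (hleafiff a).mp (hAleaf a ha)
      set A₀ : Set X := ι ⁻¹' A with hA₀
      have hAeq : ι '' A₀ = A := Set.image_preimage_eq_of_subset hAsub
      have hcard : A₀.ncard ∈ I := by
        rwa [← hAeq, Set.ncard_image_of_injective _ ι.injective] at hAcard
      obtain ⟨C, hCmin, hCuniq⟩ := hpre A₀ hcard
      have hCQ : C ∈ 𝔔 := hCmin.1
      have hca : ∀ u : ↥𝔔, IsCA (HasseE 𝔔) A u ↔ A₀ ⊆ u.1 := by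
        intro u
        constructor
        · intro h x hx
          exact hasse_subset (h (ι x) hx) (Set.mem_singleton x)
        · intro h a ha
          have ha' : a ∈ ι '' A₀ := hAeq ▸ ha
          obtain ⟨x, hx, rfl⟩ := ha'
          exact hasse_descends_iff.mpr (Set.singleton_subset_iff.mpr (h hx))
      have hlcaiff : ∀ u : ↥𝔔, IsLCA (HasseE 𝔔) A u ↔ IsMinContaining 𝔔 A₀ u.1 := by
        intro u
        constructor
        · rintro ⟨h1, h2⟩
          refine ⟨u.2, (hca u).mp h1, fun D hD hAD hDu => ?_⟩
          by_contra hne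
          exact h2 ⟨D, hD⟩ ((hca _).mpr hAD) (hasse_strict_iff.mpr (hDu.ssubset_of_ne hne))
        · rintro ⟨hQ, hA0, hmin⟩
          refine ⟨(hca u).mpr hA0, fun w hw hsw => ?_⟩
          have hss := hasse_ssubset hsw
          exact hss.ne (hmin w.1 w.2 ((hca w).mp hw) hss.subset)
      refine ⟨⟨C, hCQ⟩, (hlcaiff _).mpr hCmin, fun w hw => ?_⟩
      exact Subtype.ext (hCuniq w.1 ((hlcaiff w).mp hw))
    · -- cluster system
      have hclw : ∀ w : ↥𝔔, (⇑ι) ⁻¹' (dagCluster (HasseE 𝔔) w) = w.1 := by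
        intro w
        ext x
        simp only [Set.mem_preimage, dagCluster, Set.mem_setOf_eq]
        constructor
        · rintro ⟨-, hd⟩
          exact hasse_subset hd (Set.mem_singleton x)
        · intro hx
          exact ⟨(hleafiff _).mpr ⟨x, rfl⟩,
            hasse_descends_iff.mpr (Set.singleton_subset_iff.mpr hx)⟩
      ext S
      constructor
      · rintro ⟨C', ⟨w, rfl⟩, rfl⟩
        show (⇑ι) ⁻¹' dagCluster (HasseE 𝔔) w ∈ 𝔔
        rw [hclw w]; exact w.2
      · intro hS
        exact ⟨dagCluster (HasseE 𝔔) ⟨S, hS⟩, ⟨_, rfl⟩, hclw _⟩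
  · rintro ⟨W, hW, E, ι, hac, hleaf, hlca, hcl⟩
    haveI : Fintype W := hW
    have hclmem : ∀ v : W, (⇑ι) ⁻¹' (dagCluster E v) ∈ 𝔔 := by
      intro v; rw [← hcl]; exact ⟨dagCluster E v, ⟨v, rfl⟩, rfl⟩
    refine ⟨⟨?_, ?_⟩, ?_⟩
    · intro x
      have hx : ((⇑ι) ⁻¹' (dagCluster E (ι x))) = {x} := by
        ext y
        simp only [Set.mem_preimage, dagCluster, Set.mem_setOf_eq, Set.mem_singleton_iff]
        constructor
        · rintro ⟨-, hd⟩
          rcases Relation.ReflTransGen.cases_head hd with heq | ⟨c, hc, -⟩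
          · exact (ι.injective heq).symm
          · exact absurd hc ((hleaf (ι x)).mpr ⟨x, rfl⟩ c)
        · rintro rfl
          exact ⟨(hleaf _).mpr ⟨y, rfl⟩, Relation.ReflTransGen.refl⟩
      exact hx ▸ hclmem (ι x)
    · intro hmem
      rw [← hcl] at hmem
      obtain ⟨C', ⟨v, rfl⟩, hv⟩ := hmem
      obtain ⟨m, hm, hmv⟩ := my_exists_leaf hac v
      obtain ⟨x, rfl⟩ := (hleaf m).mp hm
      have hv' : (⇑ι) ⁻¹' (dagCluster E v) = ∅ := hv
      have hxm : x ∈ (⇑ι) ⁻¹' (dagCluster E v) := ⟨hm, hmv⟩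
      rw [hv'] at hxm
      exact hxm
    · intro A hA
      obtain ⟨v, ⟨⟨hvca, hvmin⟩, hvuniq⟩⟩ := hlca (ι '' A)
        (by rintro a ⟨x, -, rfl⟩; exact (hleaf _).mpr ⟨x, rfl⟩)
        (by rwa [Set.ncard_image_of_injective _ ι.injective])
      have key : ∀ u : W, IsCA E (ι '' A) u → dagCluster E v ⊆ dagCluster E u := by
        intro u hu
        obtain ⟨m, hmlca, hmu⟩ := my_exists_lca_le hac (ι '' A) u hu
        have hm : m = v := hvuniq m hmlca
        subst hm
        rintro z ⟨hz1, hz2⟩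
        exact ⟨hz1, hmu.trans hz2⟩
      have hAC : A ⊆ (⇑ι) ⁻¹' (dagCluster E v) := fun a ha =>
        ⟨(hleaf _).mpr ⟨a, rfl⟩, hvca (ι a) ⟨a, ha, rfl⟩⟩
      refine ⟨(⇑ι) ⁻¹' (dagCluster E v), ⟨hclmem v, hAC, ?_⟩, ?_⟩
      · intro D hD hAD hDC
        rw [← hcl] at hD
        obtain ⟨C', ⟨u, rfl⟩, rfl⟩ := hD
        have hu : IsCA E (ι '' A) u := by
          rintro b ⟨a, ha, rfl⟩
          exact (hAD ha).2
        exact le_antisymm hDC (Set.preimage_mono (key u hu))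
      · rintro D ⟨hDQ, hAD, hDmin⟩
        rw [← hcl] at hDQ
        obtain ⟨C', ⟨u, rfl⟩, rfl⟩ := hDQ
        have hu : IsCA E (ι '' A) u := by
          rintro b ⟨a, ha, rfl⟩
          exact (hAD ha).2
        exact (hDmin _ (hclmem v) hAC (Set.preimage_mono (key u hu))).symm
end

section
/- Let 𝔔 be a set system on X and I a set of integers with 1 ∈ I. Then 𝔔 is I-ary and grounded if and only if there exists an I-lca-relevant DAG G on X with the I-lca-property such that 𝔠_G = 𝔔. -/
open Relation

variable {V : Type*}

section Stmt14Aux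
set_option linter.unusedSectionVars false
set_option linter.unusedVariables false

open Relation Set

namespace Stmt14

variable {X : Type} [Fintype X] {𝔔 : Set (Set X)}

lemma trans_ssub {A B : ↥𝔔} (h : TransGen (HasseE 𝔔) A B) : B.1 ⊂ A.1 := by
  induction h with
  | single h => exact h.1
  | tail _ h ih => exact h.1.trans ih

lemma hasse_acyclic : DagAcyclic (HasseE 𝔔) := fun v h => (trans_ssub h).ne rfl

lemma desc_sub {u v : ↥𝔔} (h : Descends (HasseE 𝔔) u v) : u.1 ⊆ v.1 := by
  rcases Relation.reflTransGen_iff_eq_or_transGen.mp h with rfl | h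
  · exact subset_rfl
  · exact (trans_ssub h).subset

lemma reach : ∀ n (A B : ↥𝔔), A.1.ncard ≤ n → B.1 ⊆ A.1 → ReflTransGen (HasseE 𝔔) A B := by
  intro n
  induction n with
  | zero =>
    intro A B hn hBA
    have hA : A.1 = ∅ := (Set.ncard_eq_zero (Set.toFinite _)).mp (Nat.le_zero.mp hn)
    have : B = A := Subtype.ext (by rw [hA]; exact Set.subset_eq_empty (hA ▸ hBA) rfl)
    exact this ▸ ReflTransGen.refl
  | succ n ih =>
    intro A B hn hBA
    rcases eq_or_ne B A with rfl | hne
    · exact .refl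
    have hBA' : B.1 ⊂ A.1 := hBA.ssubset_of_ne (fun h => hne (Subtype.ext h))
    set S : Set (Set X) := {D | D ∈ 𝔔 ∧ B.1 ⊆ D ∧ D ⊂ A.1} with hS
    have hSne : B.1 ∈ S := ⟨B.2, subset_rfl, hBA'⟩
    obtain ⟨C, hCS, hCmax⟩ := Set.Finite.exists_maximalFor id S (Set.toFinite S) ⟨B.1, hSne⟩
    have hedge : HasseE 𝔔 A ⟨C, hCS.1⟩ := by
      refine ⟨hCS.2.2, ?_⟩
      rintro D hD ⟨h1, h2⟩
      exact h1.ne (Set.Subset.antisymm h1.subset (hCmax ⟨hD, hCS.2.1.trans h1.subset, h2⟩ h1.subset))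
    have hlt : C.ncard ≤ n := by
      have := Set.ncard_lt_ncard hCS.2.2 (Set.toFinite _)
      omega
    exact ReflTransGen.head hedge (ih ⟨C, hCS.1⟩ B hlt hCS.2.1)

end Stmt14
end Stmt14Aux
section Stmt14Aux2
set_option linter.unusedSectionVars false
open Relation Set
namespace Stmt14
variable {X : Type} [Fintype X] {𝔔 : Set (Set X)}

lemma desc_iff {u v : ↥𝔔} : Descends (HasseE 𝔔) u v ↔ u.1 ⊆ v.1 := by
  refine ⟨desc_sub, fun h => reach _ v u le_rfl h⟩

lemma sdesc_iff {u v : ↥𝔔} : StrictDescends (HasseE 𝔔) u v ↔ u.1 ⊂ v.1 := by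
  constructor
  · exact trans_ssub
  · intro h
    have hne : v ≠ u := fun e => h.ne (congrArg Subtype.val e).symm
    rcases Relation.reflTransGen_iff_eq_or_transGen.mp (desc_iff.mpr h.subset) with e | ht
    · exact absurd e.symm hne
    · exact ht

lemma leaf_iff (hs : ∀ x : X, ({x} : Set X) ∈ 𝔔) (h0 : ∅ ∉ 𝔔) {v : ↥𝔔} :
    DagLeaf (HasseE 𝔔) v ↔ ∃ x, v.1 = {x} := by
  constructor
  · intro hl
    by_contra hns
    have hvne : v.1.Nonempty := Set.nonempty_iff_ne_empty.mpr (fun e => h0 (e ▸ v.2))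
    obtain ⟨x, hx⟩ := hvne
    have hss : ({x} : Set X) ⊂ v.1 := by
      refine (Set.singleton_subset_iff.mpr hx).ssubset_of_ne fun e => hns ⟨x, e.symm⟩
    have : StrictDescends (HasseE 𝔔) (⟨{x}, hs x⟩ : ↥𝔔) v := sdesc_iff.mpr hss
    obtain ⟨c, hc, -⟩ := Relation.TransGen.head'_iff.mp this
    exact hl c hc
  · rintro ⟨x, hx⟩ u hu
    have : u.1 ⊂ ({x} : Set X) := hx ▸ hu.1
    exact h0 ((Set.ssubset_singleton_iff.mp this) ▸ u.2)

lemma cluster_hasse (hs : ∀ x : X, ({x} : Set X) ∈ 𝔔) (h0 : ∅ ∉ 𝔔) (v : ↥𝔔) :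
    (fun x : X => (⟨{x}, hs x⟩ : ↥𝔔)) ⁻¹' dagCluster (HasseE 𝔔) v = v.1 := by
  ext x
  simp only [Set.mem_preimage, dagCluster, Set.mem_setOf_eq]
  constructor
  · rintro ⟨-, hd⟩
    exact Set.singleton_subset_iff.mp (desc_iff.mp hd)
  · intro hx
    exact ⟨(leaf_iff hs h0).mpr ⟨x, rfl⟩, desc_iff.mpr (Set.singleton_subset_iff.mpr hx)⟩

lemma isCA_hasse (hs : ∀ x : X, ({x} : Set X) ∈ 𝔔) (A : Set X) (v : ↥𝔔) :
    IsCA (HasseE 𝔔) ((fun x : X => (⟨{x}, hs x⟩ : ↥𝔔)) '' A) v ↔ A ⊆ v.1 := by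
  constructor
  · intro h x hx
    exact Set.singleton_subset_iff.mp (desc_iff.mp (h _ (Set.mem_image_of_mem _ hx)))
  · rintro h a ⟨x, hx, rfl⟩
    exact desc_iff.mpr (Set.singleton_subset_iff.mpr (h hx))

lemma isLCA_hasse (hs : ∀ x : X, ({x} : Set X) ∈ 𝔔) (A : Set X) (v : ↥𝔔) :
    IsLCA (HasseE 𝔔) ((fun x : X => (⟨{x}, hs x⟩ : ↥𝔔)) '' A) v ↔ IsMinContaining 𝔔 A v.1 := by
  simp only [IsLCA, IsMinContaining, isCA_hasse hs]
  constructor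
  · rintro ⟨h1, h2⟩
    refine ⟨v.2, h1, fun D hD hAD hDv => ?_⟩
    by_contra hne
    exact h2 ⟨D, hD⟩ hAD (sdesc_iff.mpr (hDv.ssubset_of_ne hne))
  · rintro ⟨-, h1, h2⟩
    refine ⟨h1, fun u hAu hsd => ?_⟩
    exact (sdesc_iff.mp hsd).ne (h2 u.1 u.2 hAu (sdesc_iff.mp hsd).subset)

lemma isUniqueLCA_hasse (hs : ∀ x : X, ({x} : Set X) ∈ 𝔔) (A : Set X) (v : ↥𝔔) :
    IsUniqueLCA (HasseE 𝔔) ((fun x : X => (⟨{x}, hs x⟩ : ↥𝔔)) '' A) v ↔ IsUniqueMin 𝔔 A v.1 := by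
  simp only [IsUniqueLCA, IsUniqueMin, isLCA_hasse hs]
  constructor
  · rintro ⟨h1, h2⟩
    exact ⟨h1, fun D hD => congrArg Subtype.val (h2 ⟨D, hD.1⟩ hD)⟩
  · rintro ⟨h1, h2⟩
    exact ⟨h1, fun w hw => Subtype.ext (h2 w.1 hw)⟩

end Stmt14
end Stmt14Aux2
section Stmt14Aux3
set_option linter.unusedSectionVars false
open Relation Set
namespace Stmt14
variable {W : Type} [Fintype W] {E : W → W → Prop}

lemma exists_lca_desc (hacyc : DagAcyclic E) {A : Set W} {u : W} (hu : IsCA E A u) :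
    ∃ v, IsLCA E A v ∧ Descends E v u := by
  have ht : IsTrans W (fun a b => StrictDescends E a b) := ⟨fun a b c h1 h2 => h2.trans h1⟩
  have hi : IsIrrefl W (fun a b => StrictDescends E a b) := ⟨fun a h => hacyc a h⟩
  have hwf : WellFounded (fun a b : W => StrictDescends E a b) :=
    Finite.wellFounded_of_trans_of_irrefl _
  obtain ⟨m, ⟨hmCA, hmu⟩, hmin⟩ :=
    hwf.has_min {v | IsCA E A v ∧ Descends E v u} ⟨u, hu, .refl⟩
  refine ⟨m, ⟨hmCA, fun w hw hsw => ?_⟩, hmu⟩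
  exact hmin w ⟨hw, hmu.trans hsw.to_reflTransGen⟩ hsw

lemma desc_cluster_mono {v u : W} (h : Descends E v u) :
    dagCluster E v ⊆ dagCluster E u := by
  rintro x ⟨hl, hd⟩
  exact ⟨hl, h.trans hd⟩

variable {X : Type} (ι : X ↪ W)

lemma cluster_eq_image (hleaf : ∀ w, DagLeaf E w ↔ w ∈ Set.range ι) (v : W) :
    dagCluster E v = ι '' (ι ⁻¹' dagCluster E v) := by
  refine Set.Subset.antisymm ?_ (Set.image_preimage_subset _ _)
  rintro a ha
  obtain ⟨x, rfl⟩ := (hleaf a).mp ha.1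
  exact ⟨x, ha, rfl⟩

lemma key_lemma (hacyc : DagAcyclic E) (hleaf : ∀ w, DagLeaf E w ↔ w ∈ Set.range ι)
    (A : Set X) (v : W) (hv : IsUniqueLCA E (ι '' A) v) :
    IsUniqueMin ((fun C : Set W => (⇑ι) ⁻¹' C) '' dagClusters E) A (ι ⁻¹' dagCluster E v) := by
  set 𝔔 : Set (Set X) := (fun C : Set W => (⇑ι) ⁻¹' C) '' dagClusters E with h𝔔
  have hmem : ∀ u : W, ι ⁻¹' dagCluster E u ∈ 𝔔 := fun u => ⟨dagCluster E u, ⟨u, rfl⟩, rfl⟩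
  have hCAof : ∀ u : W, A ⊆ ι ⁻¹' dagCluster E u → IsCA E (ι '' A) u := by
    rintro u h a ⟨x, hx, rfl⟩
    exact (h hx).2
  have hAsub : A ⊆ ι ⁻¹' dagCluster E v := by
    intro x hx
    exact ⟨(hleaf (ι x)).mpr ⟨x, rfl⟩, hv.1.1 _ (Set.mem_image_of_mem _ hx)⟩
  have hvle : ∀ u : W, IsCA E (ι '' A) u → Descends E v u := by
    intro u hu
    obtain ⟨w, hw, hwu⟩ := exists_lca_desc hacyc hu
    exact (hv.2 w hw) ▸ hwu
  have hsub : ∀ u : W, A ⊆ ι ⁻¹' dagCluster E u →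
      ι ⁻¹' dagCluster E v ⊆ ι ⁻¹' dagCluster E u := fun u h =>
    Set.preimage_mono (desc_cluster_mono (hvle u (hCAof u h)))
  have hminC : IsMinContaining 𝔔 A (ι ⁻¹' dagCluster E v) := by
    refine ⟨hmem v, hAsub, ?_⟩
    rintro D ⟨C, ⟨u, rfl⟩, rfl⟩ hAD hDv
    exact Set.Subset.antisymm hDv (hsub u hAD)
  refine ⟨hminC, ?_⟩
  rintro D ⟨hD, hAD, hDmin⟩
  obtain ⟨C, ⟨u, rfl⟩, rfl⟩ := hD
  exact (hDmin _ (hmem v) hAsub (hsub u hAD)).symm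

lemma cluster_of_leaf (hleaf : ∀ w, DagLeaf E w ↔ w ∈ Set.range ι) (x : X) :
    ι ⁻¹' dagCluster E (ι x) = {x} := by
  have hl : DagLeaf E (ι x) := (hleaf _).mpr ⟨x, rfl⟩
  ext y
  simp only [Set.mem_preimage, dagCluster, Set.mem_setOf_eq, Set.mem_singleton_iff]
  constructor
  · rintro ⟨-, hd⟩
    rcases hd.cases_head with h | ⟨c, hc, -⟩
    · exact (ι.injective h).symm
    · exact absurd hc (hl c)
  · rintro rfl
    exact ⟨hl, .refl⟩

end Stmt14
end Stmt14Aux3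
/-- a set system `𝔔` on `X` is `I`-ary and grounded iff there is an
`I`-lca-relevant DAG on leaf set `X` with the `I`-lca-property whose cluster system is `𝔔`. -/
theorem stmt14 {X : Type} [Fintype X] (𝔔 : Set (Set X)) (I : Set ℕ) (h1 : 1 ∈ I)
    (hI : I ⊆ Set.Icc 1 (Fintype.card X)) :
    (((∀ x : X, ({x} : Set X) ∈ 𝔔) ∧ ∅ ∉ 𝔔) ∧
      (∀ A : Set X, A.ncard ∈ I → ∃ C, IsUniqueMin 𝔔 A C) ∧
      (∀ C ∈ 𝔔, ∃ A : Set X, A.ncard ∈ I ∧ IsUniqueMin 𝔔 A C)) ↔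
    (∃ (W : Type) (_ : Fintype W) (E : W → W → Prop) (ι : X ↪ W),
      DagAcyclic E ∧ (∀ w, DagLeaf E w ↔ w ∈ Set.range ι) ∧
      (∀ A : Set W, (∀ a ∈ A, DagLeaf E a) → A.ncard ∈ I → ∃ v, IsUniqueLCA E A v) ∧
      (∀ v : W, ∃ A : Set W, (∀ a ∈ A, DagLeaf E a) ∧ A.ncard ∈ I ∧ IsUniqueLCA E A v) ∧
      (fun C : Set W => (⇑ι) ⁻¹' C) '' dagClusters E = 𝔔) := by
  constructor
  · rintro ⟨⟨hs, h0⟩, hpre, hary⟩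
    have hinj : Function.Injective (fun x : X => (⟨{x}, hs x⟩ : ↥𝔔)) := by
      intro a b h
      simpa using congrArg Subtype.val h
    refine ⟨↥𝔔, Fintype.ofFinite _, HasseE 𝔔, ⟨_, hinj⟩, Stmt14.hasse_acyclic, ?_, ?_, ?_, ?_⟩
    · intro w
      rw [Stmt14.leaf_iff hs h0]
      simp only [Function.Embedding.coeFn_mk, Set.mem_range]
      constructor
      · rintro ⟨x, hx⟩; exact ⟨x, Subtype.ext hx.symm⟩
      · rintro ⟨x, rfl⟩; exact ⟨x, rfl⟩
    · intro A' hA'leaf hA'I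
      set A : Set X := (fun x => (⟨{x}, hs x⟩ : ↥𝔔)) ⁻¹' A' with hA
      have himg : A' = (fun x => (⟨{x}, hs x⟩ : ↥𝔔)) '' A := by
        refine Set.Subset.antisymm ?_ (Set.image_preimage_subset _ _)
        intro a ha
        obtain ⟨x, hx⟩ := (Stmt14.leaf_iff hs h0).mp (hA'leaf a ha)
        have hax : a = ⟨{x}, hs x⟩ := Subtype.ext hx
        exact ⟨x, by rw [hA, Set.mem_preimage, ← hax]; exact ha, hax.symm⟩
      have hncard : A.ncard ∈ I := by
        rw [himg, Set.ncard_image_of_injective _ hinj] at hA'I; exact hA'I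
      obtain ⟨C, hC⟩ := hpre A hncard
      exact ⟨⟨C, hC.1.1⟩, by rw [himg]; exact (Stmt14.isUniqueLCA_hasse hs A _).mpr hC⟩
    · intro v
      obtain ⟨A, hAI, hmin⟩ := hary v.1 v.2
      refine ⟨(fun x => (⟨{x}, hs x⟩ : ↥𝔔)) '' A, ?_, ?_, ?_⟩
      · rintro a ⟨x, hx, rfl⟩; exact (Stmt14.leaf_iff hs h0).mpr ⟨x, rfl⟩
      · rw [Set.ncard_image_of_injective _ hinj]; exact hAI
      · exact (Stmt14.isUniqueLCA_hasse hs A v).mpr hmin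
    · ext C
      simp only [Set.mem_image, dagClusters, Set.mem_range, Function.Embedding.coeFn_mk]
      constructor
      · rintro ⟨-, ⟨v, rfl⟩, rfl⟩
        rw [Stmt14.cluster_hasse hs h0 v]
        exact v.2
      · intro hC
        exact ⟨dagCluster (HasseE 𝔔) ⟨C, hC⟩, ⟨⟨C, hC⟩, rfl⟩,
          Stmt14.cluster_hasse hs h0 ⟨C, hC⟩⟩
  · rintro ⟨W, hW, E, ι, hacyc, hleaf, hlca, hrel, hclus⟩
    haveI := hW
    subst hclus
    refine ⟨⟨?_, ?_⟩, ?_, ?_⟩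
    · exact fun x => ⟨dagCluster E (ι x), ⟨ι x, rfl⟩, Stmt14.cluster_of_leaf ι hleaf x⟩
    · rintro ⟨C, ⟨v, rfl⟩, hempty⟩
      obtain ⟨A, hAleaf, hAI, hAlca⟩ := hrel v
      have hA1 : 1 ≤ A.ncard := (hI hAI).1
      obtain ⟨a, ha⟩ := Set.nonempty_of_ncard_ne_zero (s := A) (by omega)
      obtain ⟨x, rfl⟩ := (hleaf a).mp (hAleaf a ha)
      have hx : x ∈ (⇑ι) ⁻¹' dagCluster E v := ⟨hAleaf _ ha, hAlca.1.1 _ ha⟩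
      exact Set.eq_empty_iff_forall_notMem.mp hempty x hx
    · intro A hA
      have hA' : (ι '' A).ncard ∈ I := by
        rw [Set.ncard_image_of_injective _ ι.injective]; exact hA
      obtain ⟨v, hv⟩ := hlca (ι '' A)
        (by rintro a ⟨x, hx, rfl⟩; exact (hleaf _).mpr ⟨x, rfl⟩) hA'
      exact ⟨_, Stmt14.key_lemma ι hacyc hleaf A v hv⟩
    · rintro C ⟨D, ⟨v, rfl⟩, rfl⟩
      obtain ⟨A', hA'leaf, hA'I, hA'lca⟩ := hrel v
      have himg : A' = ι '' ((⇑ι) ⁻¹' A') := by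
        refine Set.Subset.antisymm ?_ (Set.image_preimage_subset _ _)
        intro a ha
        obtain ⟨x, rfl⟩ := (hleaf a).mp (hA'leaf a ha)
        exact ⟨x, ha, rfl⟩
      refine ⟨(⇑ι) ⁻¹' A', ?_, ?_⟩
      · rw [← Set.ncard_image_of_injective _ ι.injective, ← himg]; exact hA'I
      · exact Stmt14.key_lemma ι hacyc hleaf _ v (himg ▸ hA'lca)
end

section
/- Let G be a DAG on X with PCC, and suppose that for some A ⊆ X there is a unique inclusion-minimal cluster C ∈ 𝔠_G containing A. Then A has a unique least common ancestor in G. (Key step: if u and w are two distinct ≤_G-minimal common ancestors of A, then C_G(u) and C_G(w) overlap, and any vertex z with C_G(z) ⊆ C_G(u) ∩ C_G(w) and A ⊆ C_G(z) must satisfy z ≤_G u and z ≤_G w, contradicting minimality.) -/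
open Relation

variable {V : Type*}

/-- in a DAG with (PCC), if some `A ⊆ X` has a unique inclusion-minimal
cluster containing it, then `A` has a unique least common ancestor. -/
theorem stmt15 [Fintype V] (E : V → V → Prop) (hE : DagAcyclic E)
    (hPCC : ∀ u v : V, (Descends E u v ∨ Descends E v u) ↔
      (dagCluster E u ⊆ dagCluster E v ∨ dagCluster E v ⊆ dagCluster E u))
    (A : Set V) (hleaf : ∀ a ∈ A, DagLeaf E a)
    (C : Set V) (h : IsUniqueMin (dagClusters E) A C) :
    ∃ v, IsUniqueLCA E A v := by
  classical
  have desc_mono : ∀ {u v : V}, Descends E u v → dagCluster E u ⊆ dagCluster E v := by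
    intro u v huv x hx
    exact ⟨hx.1, huv.trans hx.2⟩
  obtain ⟨⟨hCmem, hAC, hCmin⟩, hCuniq⟩ := h
  obtain ⟨z, hz⟩ := hCmem
  have hzCA : IsCA E A z := by
    intro a ha
    have : a ∈ dagCluster E z := hz ▸ hAC ha
    exact this.2
  -- every common ancestor's cluster contains C
  have key : ∀ u, IsCA E A u → C ⊆ dagCluster E u := by
    intro u hu
    have hAu : A ⊆ dagCluster E u := fun a ha => ⟨hleaf a ha, hu a ha⟩
    set S : Set (Set V) := {D | D ∈ dagClusters E ∧ A ⊆ D ∧ D ⊆ dagCluster E u} with hS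
    have hne : (dagCluster E u) ∈ S := ⟨⟨u, rfl⟩, hAu, subset_rfl⟩
    obtain ⟨D, hD, hDmin⟩ :=
      (Finite.to_wellFoundedLT (α := Set V)).wf.has_min S ⟨_, hne⟩
    have hDminC : IsMinContaining (dagClusters E) A D := by
      refine ⟨hD.1, hD.2.1, ?_⟩
      intro D' hD'c hAD' hD'D
      by_contra hne'
      exact hDmin D' ⟨hD'c, hAD', hD'D.trans hD.2.2⟩ (lt_of_le_of_ne hD'D hne')
    have hDC : D = C := hCuniq D hDminC
    exact hDC ▸ hD.2.2
  -- existence of an LCA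
  have wf : WellFounded (fun a b : V => StrictDescends E a b) := by
    letI : IsTrans V (fun a b : V => StrictDescends E a b) :=
      ⟨fun a b c h1 h2 => h2.trans h1⟩
    letI : IsIrrefl V (fun a b : V => StrictDescends E a b) := ⟨hE⟩
    exact Finite.wellFounded_of_trans_of_irrefl _
  obtain ⟨m, hmS, hmmin⟩ := wf.has_min {v | IsCA E A v} ⟨z, hzCA⟩
  have hmLCA : IsLCA E A m := ⟨hmS, fun x hx => hmmin x hx⟩
  -- a common ancestor below an LCA equals it
  have caeq : ∀ p q, IsCA E A p → IsLCA E A q → Descends E p q → p = q := by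
    intro p q hp hq hd
    rcases hd.cases_head with h1 | ⟨c, hc, hcr⟩
    · exact h1.symm
    · exact absurd (Relation.TransGen.head' hc hcr) (hq.2 p hp)
  refine ⟨m, hmLCA, ?_⟩
  intro w hw
  have h1 : dagCluster E z ⊆ dagCluster E m := by rw [hz]; exact key m hmLCA.1
  have h2 : dagCluster E z ⊆ dagCluster E w := by rw [hz]; exact key w hw.1
  have dzm : Descends E z m ∨ Descends E m z := (hPCC z m).2 (Or.inl h1)
  have dzw : Descends E z w ∨ Descends E w z := (hPCC z w).2 (Or.inl h2)
  rcases dzm with hz_m | hm_z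
  · have hzm := caeq z m hzCA hmLCA hz_m
    rcases dzw with hz_w | hw_z
    · have hzw := caeq z w hzCA hw hz_w
      rw [← hzw, hzm]
    · exact caeq w m hw.1 hmLCA (hzm ▸ hw_z)
  · rcases dzw with hz_w | hw_z
    · have hzw := caeq z w hzCA hw hz_w
      exact (caeq m w hmLCA.1 hw (hzw ▸ hm_z)).symm
    · have cmz : dagCluster E m ⊆ dagCluster E z := desc_mono hm_z
      have hmw : dagCluster E m ⊆ dagCluster E w := cmz.trans h2
      rcases (hPCC m w).2 (Or.inl hmw) with hd | hd
      · exact (caeq m w hmLCA.1 hw hd).symm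
      · exact caeq w m hw.1 hmLCA hd
end

section
/- Let G be a DAG, let v ∈ V(G) be a non-leaf, non-root vertex, and let G ⊖ v be the directed graph obtained by deleting v and adding an edge from each parent of v to each child of v (keeping all other edges). Then G ⊖ v is a DAG, and for all u, w ∈ V(G) \ {v}: u <_G w if and only if u <_{G ⊖ v} w. -/
open Relation

variable {V : Type*}

/-- for a non-leaf non-root vertex `v` of a DAG `G`, the graph `G ⊖ v`
is a DAG and the strict ancestor order on the remaining vertices is unchanged. -/
theorem stmt18 [Fintype V] (E : V → V → Prop) (hE : DagAcyclic E) (v : V)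
    (hnl : ¬ DagLeaf E v) (hnr : ¬ DagRoot E v) :
    DagAcyclic (ominus E v) ∧
    ∀ u w : V, u ≠ v → w ≠ v →
      (StrictDescends E u w ↔ StrictDescends (ominus E v) u w) := by
  have back : ∀ a b, ominus E v a b → Relation.TransGen E a b := by
    rintro a b ⟨-, -, h | ⟨h1, h2⟩⟩
    · exact .single h
    · exact .head h1 (.single h2)
  have toE : ∀ a b, Relation.TransGen (ominus E v) a b → Relation.TransGen E a b := by
    intro a b h
    have := Relation.TransGen.mono back a b h
    rwa [Relation.transGen_idem] at this
  have fwd : ∀ b, b ≠ v → ∀ a, Relation.TransGen E a b →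
      (a ≠ v → Relation.TransGen (ominus E v) a b) ∧
      (∀ p, p ≠ v → E p v → a = v → Relation.TransGen (ominus E v) p b) := by
    intro b hb a h
    induction h using Relation.TransGen.head_induction_on with
    | single hab =>
      refine ⟨fun ha => .single ⟨ha, hb, Or.inl hab⟩, fun p hp hpv hav => ?_⟩
      subst hav
      exact .single ⟨hp, hb, Or.inr ⟨hpv, hab⟩⟩
    | @head a c h' h ihc =>
      constructor
      · intro ha
        by_cases hc : c = v
        · exact ihc.2 a ha (hc ▸ h') hc
        · exact .head ⟨ha, hc, Or.inl h'⟩ (ihc.1 hc)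
      · intro p hp hpv hav
        have h'' : E v c := hav ▸ h'
        have hc : c ≠ v := fun e => hE v (.single (e ▸ h''))
        exact .head ⟨hp, hc, Or.inr ⟨hpv, h''⟩⟩ (ihc.1 hc)
  refine ⟨fun x hx => hE x (toE x x hx), fun u w hu hw => ⟨fun h => (fwd u hu w h).1 hw,
    fun h => toE w u h⟩⟩
end

section
/- Let G be a DAG on X, let v ∈ V(G) be a vertex that is not the unique least common ancestor of any subset A ⊆ X with |A| ∈ I (where 1 ∈ I, so in particular v is not a leaf), and let H = G ⊖ v. Then for every A ⊆ X with |A| ∈ I such that lca_G(A) is well-defined, lca_H(A) is well-defined and equals lca_G(A). -/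
open Relation

variable {V : Type*}

lemma ominus_rtg {E : V → V → Prop} {v x y : V}
    (h : Relation.ReflTransGen (ominus E v) x y) : Relation.ReflTransGen E x y := by
  induction h with
  | refl => exact .refl
  | tail _ hb ih =>
    rcases hb with ⟨_, _, (he | ⟨h1, h2⟩)⟩
    · exact ih.tail he
    · exact (ih.tail h1).tail h2

lemma ominus_tg {E : V → V → Prop} {v x y : V}
    (h : Relation.TransGen (ominus E v) x y) : Relation.TransGen E x y := by
  induction h with
  | single hb =>
    rcases hb with ⟨_, _, (he | ⟨h1, h2⟩)⟩
    · exact .single he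
    · exact (Relation.TransGen.single h1).tail h2
  | tail _ hb ih =>
    rcases hb with ⟨_, _, (he | ⟨h1, h2⟩)⟩
    · exact ih.tail he
    · exact (ih.tail h1).tail h2

lemma ominus_tg_ne {E : V → V → Prop} {v x y : V}
    (h : Relation.TransGen (ominus E v) x y) : y ≠ v := by
  induction h with
  | single hb => exact hb.2.1
  | tail _ hb _ => exact hb.2.1

lemma rtg_ominus_aux {E : V → V → Prop} (hE : DagAcyclic E) {v y : V} (hy : y ≠ v)
    {x : V} (h : Relation.ReflTransGen E x y) :
    (x ≠ v → Relation.ReflTransGen (ominus E v) x y) ∧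
    (x = v → ∀ p, p ≠ v → E p v → Relation.ReflTransGen (ominus E v) p y) := by
  induction h using Relation.ReflTransGen.head_induction_on with
  | refl => exact ⟨fun _ => .refl, fun hv' => (hy hv').elim⟩
  | head hab h ih =>
    rename_i a c
    constructor
    · intro ha
      by_cases hc : c = v
      · exact ih.2 hc a ha (hc ▸ hab)
      · exact (ih.1 hc).head ⟨ha, hc, Or.inl hab⟩
    · intro ha p hp hpv
      have hvc : E v c := ha ▸ hab
      have hc : c ≠ v := fun h' => hE v (.single (h' ▸ hvc))
      exact (ih.1 hc).head ⟨hp, hc, Or.inr ⟨hpv, hvc⟩⟩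

lemma rtg_ominus {E : V → V → Prop} (hE : DagAcyclic E) {v x y : V}
    (hx : x ≠ v) (hy : y ≠ v) (h : Relation.ReflTransGen E x y) :
    Relation.ReflTransGen (ominus E v) x y :=
  (rtg_ominus_aux hE hy h).1 hx

lemma tg_ominus {E : V → V → Prop} (hE : DagAcyclic E) {v x y : V}
    (hx : x ≠ v) (hy : y ≠ v) (h : Relation.TransGen E x y) :
    Relation.TransGen (ominus E v) x y := by
  obtain ⟨b, hab, hby⟩ := Relation.TransGen.head'_iff.mp h
  by_cases hb : b = v
  · rcases Relation.ReflTransGen.cases_head (show Relation.ReflTransGen E v y from hb ▸ hby) with heq | ⟨c, hvc, hcy⟩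
    · exact absurd heq.symm hy
    · have hc : c ≠ v := fun h' => hE v (.single (h' ▸ hvc))
      exact Relation.TransGen.head' ⟨hx, hc, Or.inr ⟨hb ▸ hab, hvc⟩⟩ (rtg_ominus hE hc hy hcy)
  · exact Relation.TransGen.head' ⟨hx, hb, Or.inl hab⟩ (rtg_ominus hE hb hy hby)

lemma leaf_uniqueLCA {E : V → V → Prop} (hE : DagAcyclic E) {x : V}
    (hx : DagLeaf E x) : IsUniqueLCA E {x} x := by
  have hca : IsCA E {x} x := fun a ha => by
    rcases ha with rfl; exact .refl
  refine ⟨⟨hca, fun u hu hstrict => ?_⟩, fun w hw => ?_⟩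
  · have h1 : Relation.ReflTransGen E u x := hu x rfl
    exact hE x (hstrict.trans_left h1)
  · have h1 : Relation.ReflTransGen E w x := hw.1 x rfl
    rcases Relation.ReflTransGen.cases_head h1 with heq | ⟨c, hwc, hcx⟩
    · exact heq
    · exact absurd (Relation.TransGen.head' hwc hcx) (hw.2 x hca)

/-- if `v` is not an `I`-lca vertex of `G`, then `G ⊖ v` preserves all
well-defined `lca`s of leaf sets of size in `I`. -/
theorem stmt19 [Fintype V] (E : V → V → Prop) (hE : DagAcyclic E)
    (I : Set ℕ) (h1 : 1 ∈ I) (hI : I ⊆ Set.Icc 1 (Set.ncard {w | DagLeaf E w})) (v : V)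
    (hv : ¬ ∃ A : Set V, (∀ a ∈ A, DagLeaf E a) ∧ A.ncard ∈ I ∧ IsUniqueLCA E A v) :
    ∀ A : Set V, (∀ a ∈ A, DagLeaf E a) → A.ncard ∈ I →
      ∀ w, IsUniqueLCA E A w → IsUniqueLCA (ominus E v) A w := by
  have hvleaf : ¬ DagLeaf E v := by
    intro hl
    exact hv ⟨{v}, fun a ha => by rcases ha with rfl; exact hl,
      by simpa [Set.ncard_singleton] using h1, leaf_uniqueLCA hE hl⟩
  intro A hA hAcard w hw
  have hApos : 1 ≤ A.ncard := (hI hAcard).1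
  have hAne : A.Nonempty := Set.nonempty_of_ncard_ne_zero (by omega)
  have hAv : ∀ a ∈ A, a ≠ v := fun a ha h => hvleaf (h ▸ hA a ha)
  have hwv : w ≠ v := fun h => hv ⟨A, hA, hAcard, h ▸ hw⟩
  -- w is a common ancestor in H
  have hCAHw : IsCA (ominus E v) A w :=
    fun a ha => rtg_ominus hE hwv (hAv a ha) (hw.1.1 a ha)
  refine ⟨⟨hCAHw, fun u hu hstr => ?_⟩, fun w' hw' => ?_⟩
  · -- minimality of w in H
    have hu_ne : u ≠ v := ominus_tg_ne hstr
    have huG : IsCA E A u := fun a ha => ominus_rtg (hu a ha)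
    exact hw.1.2 u huG (ominus_tg hstr)
  · -- uniqueness in H
    have hw'v : w' ≠ v := by
      intro h
      obtain ⟨a, ha⟩ := hAne
      have hd : Relation.ReflTransGen (ominus E v) w' a := hw'.1 a ha
      rcases Relation.ReflTransGen.cases_head hd with heq | ⟨c, hwc, _⟩
      · exact hAv a ha (heq ▸ h)
      · exact hwc.1 h
    have hCAG : IsCA E A w' := fun a ha => ominus_rtg (hw'.1 a ha)
    by_cases hmin : ∀ u, IsCA E A u → ¬ Relation.TransGen E w' u
    · exact hw.2 w' ⟨hCAG, hmin⟩
    · exfalso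
      push_neg at hmin
      obtain ⟨u, huCA, hustr⟩ := hmin
      by_cases huv : u = v
      · -- u = v : v is a CA of A strictly below w'
        subst huv
        -- find a minimal CA of A below v
        have hwf : WellFounded (fun x y : V => Relation.TransGen E y x) := by
          have h2 : IsTrans V (fun x y : V => Relation.TransGen E y x) :=
            ⟨fun a b c h1 h2 => h2.trans h1⟩
          have h3 : IsIrrefl V (fun x y : V => Relation.TransGen E y x) :=
            ⟨fun a h => hE a h⟩
          exact Finite.wellFounded_of_trans_of_irrefl _
        have hSne : u ∈ {m : V | IsCA E A m ∧ Relation.ReflTransGen E u m} :=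
          ⟨huCA, .refl⟩
        obtain ⟨m, ⟨hmCA, hmv⟩, hmmin⟩ :=
          hwf.has_min {m : V | IsCA E A m ∧ Relation.ReflTransGen E u m} ⟨u, hSne⟩
        have hmLCA : IsLCA E A m := by
          refine ⟨hmCA, fun z hzCA hzstr => ?_⟩
          exact hmmin z ⟨hzCA, hmv.trans hzstr.to_reflTransGen⟩ hzstr
        have hmw : m = w := hw.2 m hmLCA
        subst hmw
        -- w ≤ v < w', so w <_H w', contradicting w' LCA in H
        have hstrG : Relation.TransGen E w' m := hustr.trans_left hmv
        exact hw'.2 m hCAHw (tg_ominus hE hw'v hwv hstrG)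
      · -- u ≠ v : transfer to H
        have hCAHu : IsCA (ominus E v) A u :=
          fun a ha => rtg_ominus hE huv (hAv a ha) (huCA a ha)
        exact hw'.2 u hCAHu (tg_ominus hE hw'v huv hustr)
end
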